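/- Let A be a symmetric matrix with nonnegative entries on a finite vertex set V, let C = {C₁,…,C_k} be a partition of V, let b ∈ V with block C(b), let Q = {q ∈ V : q ∉ C(b) and A[b,q] > 0}, and let A' = A'_{−b} be the degree/volume-preserving perturbation of A at b with respect to Q. Then the intra-block associations change exactly as follows: assoc(C(b), C(b) | A') = assoc(C(b), C(b) | A) + d_b^inter, where d_b^inter = Σ_{q∉C(b)} A[b,q], and for every block C_m ≠ C(b), assoc(C_m, C_m | A') = assoc(C_m, C_m | A) + Σ_{q∈C_m} A[b,q]. -/

import Mathlib

open Finset

/-- Degree/volume-preserving perturbation of `A` at `b` with respect to `Q`. -/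
noncomputable def perturb {V : Type*} [Fintype V] [DecidableEq V]
    (A : V → V → ℝ) (b : V) (Q : Finset V) : V → V → ℝ := fun i j =>
  if i = b ∧ j = b then A b b + ∑ q ∈ Q, A b q
  else if i = b ∧ j ∈ Q then 0
  else if j = b ∧ i ∈ Q then 0
  else if i = j ∧ i ∈ Q then A i i + A b i
  else A i j

/-- `assoc(S, T | A) = ∑_{s∈S, t∈T} A[s,t]`. -/
noncomputable def assoc {V : Type*} (A : V → V → ℝ) (S T : Finset V) : ℝ :=
  ∑ s ∈ S, ∑ t ∈ T, A s t

/-- The block of the partition (given by the labelling `cl`) with label `m`. -/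
def block {V ι : Type*} [Fintype V] [DecidableEq ι] (cl : V → ι) (m : ι) : Finset V :=
  univ.filter fun i => cl i = m

/-- Normalized association of the block labelled `m`:
`N_asso(C_m | A) = assoc(C_m, C_m | A) / assoc(C_m, V | A)`. -/
noncomputable def Nasso {V ι : Type*} [Fintype V] [DecidableEq ι]
    (A : V → V → ℝ) (cl : V → ι) (m : ι) : ℝ :=
  assoc A (block cl m) (block cl m) / assoc A (block cl m) univ

/-- Weighted inter-cluster degree of `b`: `d_b^inter = ∑_{q ∉ C(b)} A[b,q]`. -/
noncomputable def dinter {V ι : Type*} [Fintype V] [DecidableEq ι]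
    (A : V → V → ℝ) (cl : V → ι) (b : V) : ℝ :=
  ∑ q ∈ univ.filter (fun q => cl q ≠ cl b), A b q

/-- The set `Q` of inter-cluster neighbors of `b` (perturbation ratio α = 1). -/
noncomputable def interNbrs {V ι : Type*} [Fintype V] [DecidableEq ι]
    (A : V → V → ℝ) (cl : V → ι) (b : V) : Finset V :=
  univ.filter fun q => cl q ≠ cl b ∧ 0 < A b q

/-!
The perturbation only moves the weight of the edges `b — q`, `q ∈ Q`, onto the diagonal.
These edges run between blocks, so inside `C(b)` the only change is the entry `A'[b,b]`,
which gains `∑_{q∈Q} A[b,q] = d_b^inter` (by nonnegativity, `A[b,q] = 0` for the other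
`q ∉ C(b)`), while inside any other block `C_m` the only changes are the entries `A'[q,q]`,
`q ∈ C_m ∩ Q`, each gaining `A[b,q]`.
-/

section Perturb

variable {V : Type*} [Fintype V] [DecidableEq V] (A : V → V → ℝ) (b : V) (Q : Finset V)

theorem perturb_of_notMem_of_notMem {s t : V} (hs : s ∉ Q) (ht : t ∉ Q) :
    perturb A b Q s t = A s t + if s = b ∧ t = b then ∑ q ∈ Q, A b q else 0 := by
  by_cases hsb : s = b <;> by_cases htb : t = b <;> simp_all [perturb]

theorem perturb_of_ne_of_ne {s t : V} (hs : s ≠ b) (ht : t ≠ b) :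
    perturb A b Q s t = A s t + if s = t ∧ s ∈ Q then A b s else 0 := by
  by_cases h : s = t ∧ s ∈ Q
  · obtain ⟨rfl, hsQ⟩ := h
    simp [perturb, hs, hsQ]
  · simp [perturb, hs, ht, h]

theorem assoc_perturb_of_mem_of_disjoint {S T : Finset V} (hbS : b ∈ S) (hbT : b ∈ T)
    (hSQ : Disjoint S Q) (hTQ : Disjoint T Q) :
    assoc (perturb A b Q) S T = assoc A S T + ∑ q ∈ Q, A b q := by
  have hentry : ∀ s ∈ S, ∀ t ∈ T, perturb A b Q s t
      = A s t + if s = b ∧ t = b then ∑ q ∈ Q, A b q else 0 := fun s hs t ht =>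
    perturb_of_notMem_of_notMem A b Q (disjoint_left.1 hSQ hs) (disjoint_left.1 hTQ ht)
  rw [assoc, sum_congr rfl fun s hs => sum_congr rfl (hentry s hs)]
  simp [sum_add_distrib, ite_and, hbS, hbT, assoc]

theorem assoc_perturb_of_notMem {S T : Finset V} (hbS : b ∉ S) (hbT : b ∉ T) :
    assoc (perturb A b Q) S T = assoc A S T + ∑ q ∈ S ∩ T ∩ Q, A b q := by
  have hentry : ∀ s ∈ S, ∀ t ∈ T, perturb A b Q s t
      = A s t + if s = t ∧ s ∈ Q then A b s else 0 := fun s hs t ht =>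
    perturb_of_ne_of_ne A b Q (ne_of_mem_of_not_mem hs hbS) (ne_of_mem_of_not_mem ht hbT)
  rw [assoc, sum_congr rfl fun s hs => sum_congr rfl (hentry s hs)]
  simp [sum_add_distrib, ite_and, assoc, inter_assoc]

end Perturb

section InterNeighbors

variable {V ι : Type*} [Fintype V] [DecidableEq ι]
  {A : V → V → ℝ} (cl : V → ι) (b : V)

theorem disjoint_block_interNbrs : Disjoint (block cl (cl b)) (interNbrs A cl b) := by
  simp +contextual [disjoint_left, block, interNbrs]

theorem sum_interNbrs_eq_dinter (hnn : ∀ q, 0 ≤ A b q) :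
    ∑ q ∈ interNbrs A cl b, A b q = dinter A cl b := by
  rw [interNbrs, ← filter_filter, dinter]
  exact sum_filter_of_ne fun q _ hq => (hnn q).lt_of_ne' hq

theorem sum_block_inter_interNbrs [DecidableEq V] {m : ι} (hm : m ≠ cl b) (hnn : ∀ q, 0 ≤ A b q) :
    ∑ q ∈ block cl m ∩ interNbrs A cl b, A b q = ∑ q ∈ block cl m, A b q := by
  have hinter : block cl m ∩ interNbrs A cl b = (block cl m).filter (0 < A b ·) := by
    ext q
    simp +contextual [block, interNbrs, hm]
  rw [hinter]
  exact sum_filter_of_ne fun q _ hq => (hnn q).lt_of_ne' hq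

end InterNeighbors

theorem stmt2_general {V : Type*} [Fintype V] [DecidableEq V] {k : ℕ}
    (A : V → V → ℝ) (hnn : ∀ i j, 0 ≤ A i j)
    (cl : V → Fin k) (b : V) :
    assoc (perturb A b (interNbrs A cl b)) (block cl (cl b)) (block cl (cl b))
        = assoc A (block cl (cl b)) (block cl (cl b)) + dinter A cl b ∧
    ∀ m : Fin k, m ≠ cl b →
      assoc (perturb A b (interNbrs A cl b)) (block cl m) (block cl m)
        = assoc A (block cl m) (block cl m) + ∑ q ∈ block cl m, A b q := by
  have hb : b ∈ block cl (cl b) := by simp [block]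
  constructor
  · rw [← sum_interNbrs_eq_dinter cl b (hnn b)]
    exact assoc_perturb_of_mem_of_disjoint A b _ hb hb
      (disjoint_block_interNbrs cl b) (disjoint_block_interNbrs cl b)
  · intro m hm
    have hbm : b ∉ block cl m := by simpa [block] using hm.symm
    rw [assoc_perturb_of_notMem A b _ hbm hbm, inter_self,
      sum_block_inter_interNbrs cl b hm (hnn b)]

theorem stmt2 {V : Type*} [Fintype V] [DecidableEq V] {k : ℕ}
    (A : V → V → ℝ) (hsym : ∀ i j, A i j = A j i) (hnn : ∀ i j, 0 ≤ A i j)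
    (cl : V → Fin k) (hpart : Function.Surjective cl) (b : V) :
    assoc (perturb A b (interNbrs A cl b)) (block cl (cl b)) (block cl (cl b))
        = assoc A (block cl (cl b)) (block cl (cl b)) + dinter A cl b ∧
    ∀ m : Fin k, m ≠ cl b →
      assoc (perturb A b (interNbrs A cl b)) (block cl m) (block cl m)
        = assoc A (block cl m) (block cl m) + ∑ q ∈ block cl m, A b q :=
  stmt2_general A hnn cl b
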